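/- arXiv:2406.09115 — 4 statements merged into one kernel-verified Lean document; each statement's English description precedes it below -/
import Mathlib

section
/- Suppose a primitive Lindblad semigroup P_t = e^{tL} on the mean-zero subspace 𝔥 satisfies the T-average exponential decay: (1/T)∫_t^{t+T} ‖P_s X‖ ds ≤ e^{-νt} (1/T)∫_0^T ‖P_s X‖ ds for all X ∈ 𝔥 and t ≥ 0, together with the contraction property ‖P_s X‖ ≤ ‖X‖. Then L is invertible on 𝔥 and ‖L^{-1}‖ ≤ 1/ν + T. -/
open MeasureTheory intervalIntegral

section AvgDecayAux

open Complex Filter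

variable {V : Type*} [NormedAddCommGroup V] [NormedSpace ℂ V] [FiniteDimensional ℂ V]

private lemma AD.hasDeriv (L : V →L[ℂ] V) (X : V) (t : ℝ) :
    HasDerivAt (fun s : ℝ => NormedSpace.exp (s • L) X)
      (NormedSpace.exp (t • L) (L X)) t := by
  have h : HasDerivAt (fun u : ℂ => NormedSpace.exp (u • L))
      (NormedSpace.exp ((t : ℂ) • L) * L) (t : ℂ) := hasDerivAt_exp_smul_const L (t : ℂ)
  have h2 : HasDerivAt (fun s : ℝ => NormedSpace.exp ((s : ℂ) • L))
      (NormedSpace.exp ((t : ℂ) • L) * L) t := by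
    have := ((h.hasFDerivAt.restrictScalars ℝ).comp t (ofRealCLM.hasFDerivAt)).hasDerivAt
    simpa [Function.comp_def] using this
  have h3 : HasDerivAt (fun s : ℝ => NormedSpace.exp (s • L))
      (NormedSpace.exp (t • L) * L) t := by
    simpa [Complex.coe_smul] using h2
  have ev := ((ContinuousLinearMap.apply ℂ V X).restrictScalars ℝ).hasFDerivAt
    (x := NormedSpace.exp (t • L))
  have := ev.comp_hasDerivAt t h3
  exact this

private lemma AD.contP (L : V →L[ℂ] V) (X : V) :
    Continuous (fun s : ℝ => NormedSpace.exp (s • L) X) :=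
  letI : NormedAlgebra ℚ (V →L[ℂ] V) := NormedAlgebra.restrictScalars ℚ ℂ _
  ((NormedSpace.exp_continuous.comp
    (continuous_id.smul continuous_const)).clm_apply continuous_const)

private lemma AD.semigroup (L : V →L[ℂ] V) (a b : ℝ) (X : V) :
    NormedSpace.exp ((a + b) • L) X
      = NormedSpace.exp (a • L) (NormedSpace.exp (b • L) X) := by
  have hc : Commute (a • L) (b • L) := ((Commute.refl L).smul_left a).smul_right b
  letI : NormedAlgebra ℚ (V →L[ℂ] V) := NormedAlgebra.restrictScalars ℚ ℂ _
  rw [add_smul, NormedSpace.exp_add_of_commute hc, ContinuousLinearMap.mul_apply]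

private lemma AD.mono (L : V →L[ℂ] V)
    (hcontr : ∀ t : ℝ, 0 ≤ t → ∀ X : V, ‖NormedSpace.exp (t • L) X‖ ≤ ‖X‖)
    (X : V) {a b : ℝ} (hab : a ≤ b) :
    ‖NormedSpace.exp (b • L) X‖ ≤ ‖NormedSpace.exp (a • L) X‖ := by
  have : b = (b - a) + a := by ring
  rw [this, AD.semigroup]
  exact hcontr (b - a) (by linarith) _

private lemma AD.ftc (L : V →L[ℂ] V) (X : V) (R : ℝ) :
    ∫ s in (0:ℝ)..R, NormedSpace.exp (s • L) (L X)
      = NormedSpace.exp (R • L) X - X := by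
  have := intervalIntegral.integral_eq_sub_of_hasDerivAt
    (f := fun s : ℝ => NormedSpace.exp (s • L) X)
    (f' := fun s : ℝ => NormedSpace.exp (s • L) (L X))
    (a := 0) (b := R)
    (fun t _ => AD.hasDeriv L X t)
    ((AD.contP L (L X)).intervalIntegrable _ _)
  rw [this]
  simp [NormedSpace.exp_zero]

private lemma AD.tail (ν T R : ℝ) (hν : 0 < ν) :
    ∫ s in T..R, Real.exp (-ν * (s - T)) ≤ 1 / ν := by
  have hν' : ν ≠ 0 := hν.ne'
  have h1 : ∫ s in T..R, Real.exp (-ν * (s - T))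
      = ∫ u in (0:ℝ)..(R - T), Real.exp (-ν * u) := by
    have := intervalIntegral.integral_comp_sub_right
      (a := T) (b := R) (fun u => Real.exp (-ν * u)) T
    simpa using this
  have h2 : ∫ u in (0:ℝ)..(R - T), Real.exp (-ν * u)
      = (1 - Real.exp (-ν * (R - T))) / ν := by
    have h := intervalIntegral.integral_comp_mul_left
      (a := (0:ℝ)) (b := R - T) Real.exp (c := -ν) (neg_ne_zero.mpr hν')
    rw [h, integral_exp, smul_eq_mul, mul_zero, Real.exp_zero, eq_div_iff hν']
    linear_combination (1 - Real.exp (-ν * (R - T))) * inv_mul_cancel₀ hν'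
  rw [h1, h2]
  have h3 : (0:ℝ) ≤ Real.exp (-ν * (R - T)) := (Real.exp_pos _).le
  rw [div_le_div_iff₀ hν hν]
  nlinarith

private lemma AD.decay (L : V →L[ℂ] V) (ν T : ℝ) (hT : 0 < T)
    (hcontr : ∀ t : ℝ, 0 ≤ t → ∀ X : V, ‖NormedSpace.exp (t • L) X‖ ≤ ‖X‖)
    (havg : ∀ X : V, ∀ t : ℝ, 0 ≤ t →
      (1 / T) * ∫ s in t..(t + T), ‖NormedSpace.exp (s • L) X‖ ≤
        Real.exp (-ν * t) *
          ((1 / T) * ∫ s in (0 : ℝ)..T, ‖NormedSpace.exp (s • L) X‖))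
    (X : V) {t : ℝ} (ht : 0 ≤ t) :
    ‖NormedSpace.exp ((t + T) • L) X‖ ≤ Real.exp (-ν * t) * ‖X‖ := by
  set f : ℝ → ℝ := fun s => ‖NormedSpace.exp (s • L) X‖ with hf
  have hfc : Continuous f := (AD.contP L X).norm
  have h1 : T * f (t + T) ≤ ∫ s in t..(t + T), f s := by
    have : ∫ s in t..(t + T), f (t + T) ≤ ∫ s in t..(t + T), f s := by
      apply intervalIntegral.integral_mono_on (by linarith)
        (intervalIntegrable_const) (hfc.intervalIntegrable _ _)
      intro s hs
      exact AD.mono L hcontr X hs.2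
    simpa [mul_comm] using this
  have h2 : ∫ s in (0:ℝ)..T, f s ≤ T * ‖X‖ := by
    have : ∫ s in (0:ℝ)..T, f s ≤ ∫ s in (0:ℝ)..T, ‖X‖ := by
      apply intervalIntegral.integral_mono_on hT.le (hfc.intervalIntegrable _ _)
        (intervalIntegrable_const)
      intro s hs
      exact hcontr s hs.1 X
    simpa [mul_comm] using this
  have h3 := havg X t ht
  have hT' : 0 < 1 / T := by positivity
  have hE : 0 < Real.exp (-ν * t) := Real.exp_pos _
  calc f (t + T) = (1/T) * (T * f (t+T)) := by field_simp
    _ ≤ (1/T) * ∫ s in t..(t + T), f s := mul_le_mul_of_nonneg_left h1 hT'.le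
    _ ≤ Real.exp (-ν * t) * ((1 / T) * ∫ s in (0:ℝ)..T, f s) := h3
    _ ≤ Real.exp (-ν * t) * ((1 / T) * (T * ‖X‖)) := by
        apply mul_le_mul_of_nonneg_left _ hE.le
        exact mul_le_mul_of_nonneg_left h2 hT'.le
    _ = Real.exp (-ν * t) * ‖X‖ := by field_simp

private lemma AD.key (L : V →L[ℂ] V) (ν T : ℝ) (hν : 0 < ν) (hT : 0 < T)
    (hcontr : ∀ t : ℝ, 0 ≤ t → ∀ X : V, ‖NormedSpace.exp (t • L) X‖ ≤ ‖X‖)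
    (havg : ∀ X : V, ∀ t : ℝ, 0 ≤ t →
      (1 / T) * ∫ s in t..(t + T), ‖NormedSpace.exp (s • L) X‖ ≤
        Real.exp (-ν * t) *
          ((1 / T) * ∫ s in (0 : ℝ)..T, ‖NormedSpace.exp (s • L) X‖))
    (X : V) : ‖X‖ ≤ (1 / ν + T) * ‖L X‖ := by
  set Y : V := L X with hY
  have hdecay := AD.decay L ν T hT hcontr havg
  have hbound : ∀ R : ℝ, T ≤ R →
      ‖X‖ ≤ Real.exp (-ν * (R - T)) * ‖X‖ + (T * ‖Y‖ + (1 / ν) * ‖Y‖) := by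
    intro R hR
    have hR0 : (0:ℝ) ≤ R := le_trans hT.le hR
    -- FTC rearranged
    have hftc := AD.ftc L X R
    have hXeq : X = NormedSpace.exp (R • L) X - ∫ s in (0:ℝ)..R, NormedSpace.exp (s • L) Y := by
      rw [← hY] at hftc
      rw [hftc]; abel
    -- bound the integral
    have hint : ‖∫ s in (0:ℝ)..R, NormedSpace.exp (s • L) Y‖
        ≤ T * ‖Y‖ + (1 / ν) * ‖Y‖ := by
      have hnorm : ‖∫ s in (0:ℝ)..R, NormedSpace.exp (s • L) Y‖
          ≤ ∫ s in (0:ℝ)..R, ‖NormedSpace.exp (s • L) Y‖ :=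
        intervalIntegral.norm_integral_le_integral_norm hR0
      have hsplit : ∫ s in (0:ℝ)..R, ‖NormedSpace.exp (s • L) Y‖
          = (∫ s in (0:ℝ)..T, ‖NormedSpace.exp (s • L) Y‖)
            + ∫ s in T..R, ‖NormedSpace.exp (s • L) Y‖ :=
        (intervalIntegral.integral_add_adjacent_intervals
          (((AD.contP L Y).norm).intervalIntegrable _ _)
          (((AD.contP L Y).norm).intervalIntegrable _ _)).symm
      have hseg1 : ∫ s in (0:ℝ)..T, ‖NormedSpace.exp (s • L) Y‖ ≤ T * ‖Y‖ := by
        have : ∫ s in (0:ℝ)..T, ‖NormedSpace.exp (s • L) Y‖ ≤ ∫ s in (0:ℝ)..T, ‖Y‖ := by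
          apply intervalIntegral.integral_mono_on hT.le
            (((AD.contP L Y).norm).intervalIntegrable _ _) intervalIntegrable_const
          intro s hs
          exact hcontr s hs.1 Y
        simpa [mul_comm] using this
      have hseg2 : ∫ s in T..R, ‖NormedSpace.exp (s • L) Y‖ ≤ (1 / ν) * ‖Y‖ := by
        have step1 : ∫ s in T..R, ‖NormedSpace.exp (s • L) Y‖
            ≤ ∫ s in T..R, Real.exp (-ν * (s - T)) * ‖Y‖ := by
          apply intervalIntegral.integral_mono_on hR
            (((AD.contP L Y).norm).intervalIntegrable _ _)
            (((Real.continuous_exp.comp (continuous_const.mul (continuous_id.sub continuous_const))).mul continuous_const).intervalIntegrable _ _)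
          intro s hs
          have hs' : (0:ℝ) ≤ s - T := by linarith [hs.1]
          have := hdecay Y hs'
          have heq : (s - T) + T = s := by ring
          rwa [heq] at this
        have step2 : ∫ s in T..R, Real.exp (-ν * (s - T)) * ‖Y‖
            = (∫ s in T..R, Real.exp (-ν * (s - T))) * ‖Y‖ := by
          rw [intervalIntegral.integral_mul_const]
        have step3 : (∫ s in T..R, Real.exp (-ν * (s - T))) * ‖Y‖ ≤ (1 / ν) * ‖Y‖ :=
          mul_le_mul_of_nonneg_right (AD.tail ν T R hν) (norm_nonneg _)
        calc ∫ s in T..R, ‖NormedSpace.exp (s • L) Y‖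
            ≤ ∫ s in T..R, Real.exp (-ν * (s - T)) * ‖Y‖ := step1
          _ = (∫ s in T..R, Real.exp (-ν * (s - T))) * ‖Y‖ := step2
          _ ≤ (1 / ν) * ‖Y‖ := step3
      calc ‖∫ s in (0:ℝ)..R, NormedSpace.exp (s • L) Y‖
          ≤ ∫ s in (0:ℝ)..R, ‖NormedSpace.exp (s • L) Y‖ := hnorm
        _ = _ := hsplit
        _ ≤ T * ‖Y‖ + (1 / ν) * ‖Y‖ := add_le_add hseg1 hseg2
    -- bound the semigroup term
    have hsg : ‖NormedSpace.exp (R • L) X‖ ≤ Real.exp (-ν * (R - T)) * ‖X‖ := by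
      have hs' : (0:ℝ) ≤ R - T := by linarith
      have := hdecay X hs'
      have heq : (R - T) + T = R := by ring
      rwa [heq] at this
    calc ‖X‖ = ‖NormedSpace.exp (R • L) X - ∫ s in (0:ℝ)..R, NormedSpace.exp (s • L) Y‖ := by
          rw [← hXeq]
      _ ≤ ‖NormedSpace.exp (R • L) X‖ + ‖∫ s in (0:ℝ)..R, NormedSpace.exp (s • L) Y‖ :=
          norm_sub_le _ _
      _ ≤ Real.exp (-ν * (R - T)) * ‖X‖ + (T * ‖Y‖ + (1 / ν) * ‖Y‖) := add_le_add hsg hint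
  -- take the limit R → ∞
  have hsub : Tendsto (fun R : ℝ => R - T) atTop atTop := by
    simpa [sub_eq_add_neg] using tendsto_atTop_add_const_right atTop (-T) tendsto_id
  have hlim0 : Tendsto (fun R : ℝ => -ν * (R - T)) atTop atBot :=
    hsub.const_mul_atTop_of_neg (neg_neg_of_pos hν)
  have hlim : Tendsto
      (fun R : ℝ => Real.exp (-ν * (R - T)) * ‖X‖ + (T * ‖Y‖ + (1 / ν) * ‖Y‖)) atTop
      (nhds (0 * ‖X‖ + (T * ‖Y‖ + (1 / ν) * ‖Y‖))) :=
    (((Real.tendsto_exp_atBot.comp hlim0).mul_const _).add_const _)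
  have hle : ‖X‖ ≤ 0 * ‖X‖ + (T * ‖Y‖ + (1 / ν) * ‖Y‖) :=
    ge_of_tendsto hlim (Filter.eventually_atTop.2 ⟨T, hbound⟩)
  have : (1 / ν + T) * ‖Y‖ = T * ‖Y‖ + (1 / ν) * ‖Y‖ := by ring
  rw [← hY] at *
  linarith

end AvgDecayAux

/-- If the contraction semigroup `P_t = exp(tL)` satisfies the `T`-average exponential decay
with rate `ν`, then `L` is invertible and `‖L⁻¹‖ ≤ 1/ν + T`. -/
theorem generator_invertible_of_average_decay {V : Type*} [NormedAddCommGroup V]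
    [NormedSpace ℂ V] [FiniteDimensional ℂ V]
    (L : V →L[ℂ] V) (ν T : ℝ) (hν : 0 < ν) (hT : 0 < T)
    (hcontr : ∀ t : ℝ, 0 ≤ t → ∀ X : V, ‖NormedSpace.exp (t • L) X‖ ≤ ‖X‖)
    (havg : ∀ X : V, ∀ t : ℝ, 0 ≤ t →
      (1 / T) * ∫ s in t..(t + T), ‖NormedSpace.exp (s • L) X‖ ≤
        Real.exp (-ν * t) *
          ((1 / T) * ∫ s in (0 : ℝ)..T, ‖NormedSpace.exp (s • L) X‖)) :
    ∃ M : V →L[ℂ] V, L.comp M = ContinuousLinearMap.id ℂ V ∧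
      M.comp L = ContinuousLinearMap.id ℂ V ∧ ‖M‖ ≤ 1 / ν + T := by
  have key : ∀ X : V, ‖X‖ ≤ (1 / ν + T) * ‖L X‖ := AD.key L ν T hν hT hcontr havg
  have hinj : Function.Injective L := by
    intro a b hab
    have h1 := key (a - b)
    rw [map_sub, hab, sub_self, norm_zero, mul_zero] at h1
    have := norm_nonneg (a - b)
    have h2 : a - b = 0 := by
      rw [← norm_le_zero_iff]; linarith
    exact sub_eq_zero.mp h2
  have hinj' : Function.Injective (L : V →ₗ[ℂ] V) := hinj
  have hsurj : Function.Surjective (L : V →ₗ[ℂ] V) :=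
    (LinearMap.injective_iff_surjective).mp hinj'
  let e : V ≃ₗ[ℂ] V := LinearEquiv.ofBijective (L : V →ₗ[ℂ] V) ⟨hinj', hsurj⟩
  let M : V →L[ℂ] V := LinearMap.toContinuousLinearMap (e.symm : V →ₗ[ℂ] V)
  have hLM : ∀ y : V, L (M y) = y := fun y => e.apply_symm_apply y
  have hML : ∀ x : V, M (L x) = x := fun x => e.symm_apply_apply x
  refine ⟨M, ?_, ?_, ?_⟩
  · ext y; exact hLM y
  · ext x; exact hML x
  · apply ContinuousLinearMap.opNorm_le_bound _ (by positivity)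
    intro y
    have := key (M y)
    rwa [hLM y] at this
end

section
/- Let t_rel(ε) = inf{t ≥ 0 : ‖P_t X‖ ≤ ε‖X‖ for all X ∈ 𝔥} be the ε-relaxation time of a contraction semigroup P_t on 𝔥, and let t_0(ε) = inf{(1/ν)log(1/ε) + T : ν, T ≥ 0 such that ‖P_t X‖ ≤ e^{-ν(t-T)}‖X‖ for all X ∈ 𝔥, t ≥ 0}. Then t_rel(ε) ≤ t_0(ε) ≤ 2 t_rel(ε) for every ε ∈ (0,1). -/
open MeasureTheory

/-- For a contraction semigroup `P_t` with `‖P_t‖ → 0`, the relaxation time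
`t_rel(ε)` and the delayed-decay time `t_0(ε)` satisfy `t_rel(ε) ≤ t_0(ε) ≤ 2 t_rel(ε)`. -/
theorem relaxation_time_comparison {V : Type*} [NormedAddCommGroup V]
    [NormedSpace ℂ V] [FiniteDimensional ℂ V]
    (P : ℝ → V →L[ℂ] V)
    (hP0 : P 0 = ContinuousLinearMap.id ℂ V)
    (hsem : ∀ s t : ℝ, 0 ≤ s → 0 ≤ t → P (s + t) = (P s).comp (P t))
    (hPcont : Continuous P)
    (hcontr : ∀ t : ℝ, 0 ≤ t → ‖P t‖ ≤ 1)
    (htend : Filter.Tendsto (fun t => ‖P t‖) Filter.atTop (nhds 0))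
    (ε : ℝ) (hε : ε ∈ Set.Ioo (0 : ℝ) 1) :
    sInf {t : ℝ | 0 ≤ t ∧ ∀ X : V, ‖P t X‖ ≤ ε * ‖X‖} ≤
        sInf {c : ℝ | ∃ ν T : ℝ, 0 < ν ∧ 0 ≤ T ∧
          (∀ t : ℝ, 0 ≤ t → ∀ X : V, ‖P t X‖ ≤ Real.exp (-(ν * (t - T))) * ‖X‖) ∧
          c = (1 / ν) * Real.log (1 / ε) + T} ∧
      sInf {c : ℝ | ∃ ν T : ℝ, 0 < ν ∧ 0 ≤ T ∧
          (∀ t : ℝ, 0 ≤ t → ∀ X : V, ‖P t X‖ ≤ Real.exp (-(ν * (t - T))) * ‖X‖) ∧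
          c = (1 / ν) * Real.log (1 / ε) + T} ≤
        2 * sInf {t : ℝ | 0 ≤ t ∧ ∀ X : V, ‖P t X‖ ≤ ε * ‖X‖} := by
  obtain ⟨hε0, hε1⟩ := hε
  set A : Set ℝ := {t : ℝ | 0 ≤ t ∧ ∀ X : V, ‖P t X‖ ≤ ε * ‖X‖} with hAdef
  set B : Set ℝ := {c : ℝ | ∃ ν T : ℝ, 0 < ν ∧ 0 ≤ T ∧
          (∀ t : ℝ, 0 ≤ t → ∀ X : V, ‖P t X‖ ≤ Real.exp (-(ν * (t - T))) * ‖X‖) ∧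
          c = (1 / ν) * Real.log (1 / ε) + T} with hBdef
  have hlog : 0 < Real.log (1 / ε) := by
    rw [one_div, Real.log_inv]
    linarith [Real.log_neg hε0 hε1]
  -- A is nonempty
  have hA_ne : A.Nonempty := by
    obtain ⟨t, ht1, ht2⟩ :=
      ((htend.eventually (gt_mem_nhds hε0)).and (Filter.eventually_ge_atTop (0:ℝ))).exists
    refine ⟨t, ht2, fun X => ?_⟩
    calc ‖P t X‖ ≤ ‖P t‖ * ‖X‖ := (P t).le_opNorm X
      _ ≤ ε * ‖X‖ := by
          apply mul_le_mul_of_nonneg_right (le_of_lt ht1) (norm_nonneg X)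
  have hA_bdd : BddBelow A := ⟨0, fun t ht => ht.1⟩
  have hA_nonneg : 0 ≤ sInf A := le_csInf hA_ne fun t ht => ht.1
  -- A is upward closed
  have hup : ∀ t ∈ A, ∀ t' : ℝ, t ≤ t' → t' ∈ A := by
    rintro t ⟨ht0, htA⟩ t' htt'
    refine ⟨le_trans ht0 htt', fun X => ?_⟩
    have h : P t' = (P (t' - t)).comp (P t) := by
      have := hsem (t' - t) t (by linarith) ht0
      rwa [sub_add_cancel] at this
    rw [h]
    calc ‖(P (t' - t)) ((P t) X)‖ ≤ ‖P (t' - t)‖ * ‖(P t) X‖ := (P (t' - t)).le_opNorm _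
      _ ≤ 1 * (ε * ‖X‖) := by
          apply mul_le_mul (hcontr _ (by linarith)) (htA X) (norm_nonneg _)
          exact zero_le_one
      _ = ε * ‖X‖ := one_mul _
  -- iteration: if t ∈ A then ‖P s X‖ ≤ ε^n ‖X‖ for s ≥ n t
  have hiter : ∀ t ∈ A, ∀ n : ℕ, ∀ s : ℝ, (n : ℝ) * t ≤ s → ∀ X : V,
      ‖P s X‖ ≤ ε ^ n * ‖X‖ := by
    rintro t ⟨ht0, htA⟩ n
    induction n with
    | zero =>
      intro s hs X
      simp only [Nat.cast_zero, zero_mul] at hs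
      calc ‖P s X‖ ≤ ‖P s‖ * ‖X‖ := (P s).le_opNorm X
        _ ≤ 1 * ‖X‖ := mul_le_mul_of_nonneg_right (hcontr s hs) (norm_nonneg X)
        _ = ε ^ 0 * ‖X‖ := by simp
    | succ n ih =>
      intro s hs X
      have hnt : (0:ℝ) ≤ (n : ℝ) * t := mul_nonneg (Nat.cast_nonneg n) ht0
      have hst : (n : ℝ) * t ≤ s - t := by
        push_cast at hs; nlinarith
      have h : P s = (P t).comp (P (s - t)) := by
        have := hsem t (s - t) ht0 (by linarith)
        rwa [add_sub_cancel] at this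
      rw [h]
      calc ‖(P t) ((P (s - t)) X)‖ ≤ ε * ‖(P (s - t)) X‖ := htA _
        _ ≤ ε * (ε ^ n * ‖X‖) :=
            mul_le_mul_of_nonneg_left (ih (s - t) hst X) (le_of_lt hε0)
        _ = ε ^ (n + 1) * ‖X‖ := by ring
  -- key: if t ∈ A with 0 < t, then 2 t ∈ B
  have hkey : ∀ t ∈ A, 0 < t → (2 * t) ∈ B := by
    intro t htA ht
    refine ⟨Real.log (1 / ε) / t, t, div_pos hlog ht, le_of_lt ht, ?_, ?_⟩
    · intro s hs X
      set n : ℕ := ⌊s / t⌋₊ with hn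
      have hns : (n : ℝ) * t ≤ s := by
        have := Nat.floor_le (show (0:ℝ) ≤ s / t from div_nonneg hs (le_of_lt ht))
        calc (n : ℝ) * t ≤ (s / t) * t := mul_le_mul_of_nonneg_right this (le_of_lt ht)
          _ = s := div_mul_cancel₀ s (ne_of_gt ht)
      have hlt : s / t < (n : ℝ) + 1 := Nat.lt_floor_add_one _
      have hεn : ε ^ n ≤ Real.exp (-(Real.log (1 / ε) / t * (s - t))) := by
        have hεexp : ε ^ n = Real.exp (-((n : ℝ) * Real.log (1 / ε))) := by
          rw [one_div, Real.log_inv, mul_neg, neg_neg, Real.exp_nat_mul, Real.exp_log hε0]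
        rw [hεexp]
        apply Real.exp_le_exp.mpr
        rw [neg_le_neg_iff, div_mul_eq_mul_div, div_le_iff₀ ht]
        have hsnt : s - t ≤ (n : ℝ) * t := by
          have := (div_lt_iff₀ ht).mp hlt
          nlinarith
        nlinarith [mul_le_mul_of_nonneg_left hsnt (le_of_lt hlog)]
      calc ‖P s X‖ ≤ ε ^ n * ‖X‖ := hiter t htA n s hns X
        _ ≤ Real.exp (-(Real.log (1 / ε) / t * (s - t))) * ‖X‖ :=
            mul_le_mul_of_nonneg_right hεn (norm_nonneg X)
    · field_simp
      ring
  have hB_ne : B.Nonempty := by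
    obtain ⟨t, htA⟩ := hA_ne
    exact ⟨2 * (t + 1), hkey (t + 1) (hup t htA (t + 1) (by linarith)) (by linarith [htA.1])⟩
  have hB_bdd : BddBelow B := by
    refine ⟨0, ?_⟩
    rintro c ⟨ν, T, hν, hT, _, rfl⟩
    have : 0 ≤ (1 / ν) * Real.log (1 / ε) :=
      mul_nonneg (le_of_lt (one_div_pos.mpr hν)) (le_of_lt hlog)
    linarith
  constructor
  · -- sInf A ≤ sInf B
    apply le_csInf hB_ne
    rintro c ⟨ν, T, hν, hT, hdec, rfl⟩
    apply csInf_le hA_bdd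
    refine ⟨?_, fun X => ?_⟩
    · have : 0 ≤ (1 / ν) * Real.log (1 / ε) :=
        mul_nonneg (le_of_lt (one_div_pos.mpr hν)) (le_of_lt hlog)
      linarith
    · have h0 : (0:ℝ) ≤ (1 / ν) * Real.log (1 / ε) + T := by
        have : 0 ≤ (1 / ν) * Real.log (1 / ε) :=
          mul_nonneg (le_of_lt (one_div_pos.mpr hν)) (le_of_lt hlog)
        linarith
      have := hdec _ h0 X
      have harg : ν * ((1 / ν) * Real.log (1 / ε) + T - T) = Real.log (1 / ε) := by
        field_simp
        ring
      rw [harg] at this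
      have hexp : Real.exp (-Real.log (1 / ε)) = ε := by
        rw [one_div, Real.log_inv, neg_neg, Real.exp_log hε0]
      rwa [hexp] at this
  · -- sInf B ≤ 2 * sInf A
    apply le_of_forall_pos_le_add
    intro δ hδ
    obtain ⟨t, htA, htlt⟩ := Real.lt_sInf_add_pos hA_ne (half_pos hδ)
    have ht' : sInf A + δ / 2 ∈ A := hup t htA _ (le_of_lt htlt)
    have hpos : 0 < sInf A + δ / 2 := by linarith
    have := csInf_le hB_bdd (hkey _ ht' hpos)
    linarith
end

section
/- Let A be a negative semidefinite self-adjoint operator and B an anti-Hermitian operator on a finite-dimensional inner product space V, with L = A + B. If x is an eigenvector of L with eigenvalue μ satisfying Re(μ) = -λ where λ equals the smallest nonzero eigenvalue of -A, and -⟨x, A x⟩ = λ‖x‖², then x is an eigenvector of A with A x = -λ x, and consequently x is also an eigenvector of B. -/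
/-- If `x` is an eigenvector of `L = A + B` (with `A = A* ≤ 0` negative definite,
`B` anti-Hermitian) whose eigenvalue `μ` has real part `-λ`, where `λ > 0` is the
smallest (nonzero) eigenvalue of `-A`, and `-⟨x, A x⟩ = λ‖x‖²`, then `A x = -λ x`
and `x` is also an eigenvector of `B`. -/
theorem eigenvector_of_sum_is_joint_eigenvector {V : Type*}
    [NormedAddCommGroup V] [InnerProductSpace ℂ V] [FiniteDimensional ℂ V]
    (A B : V →ₗ[ℂ] V) (lam : ℝ) (hlam : 0 < lam)
    (hAself : ∀ x y : V, (inner ℂ (A x) y : ℂ) = inner ℂ x (A y))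
    (hAneg : ∀ x : V, (inner ℂ x (A x) : ℂ).re ≤ 0)
    (hBanti : ∀ x y : V, (inner ℂ (B x) y : ℂ) = -inner ℂ x (B y))
    (heigA : Module.End.HasEigenvalue A (-(lam : ℂ)))
    (hmin : ∀ c : ℂ, Module.End.HasEigenvalue A c → c ≠ 0 → lam ≤ -c.re)
    (hAinj : Function.Injective A)
    (μ : ℂ) (x : V) (hx : x ≠ 0) (hL : A x + B x = μ • x)
    (hre : μ.re = -lam)
    (hray : (-(inner ℂ x (A x) : ℂ)).re = lam * ‖x‖ ^ 2) :
    A x = (-(lam : ℂ)) • x ∧ ∃ c : ℂ, B x = c • x := by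
  have hSym : A.IsSymmetric := fun u v => hAself u v
  have hn : Module.finrank ℂ V = Module.finrank ℂ V := rfl
  set n := Module.finrank ℂ V with hndef
  let b := hSym.eigenvectorBasis hn
  set α : Fin n → ℝ := hSym.eigenvalues hn with hα
  have hApplyRepr : ∀ (v : V) (i : Fin n),
      b.repr (A v) i = α i * b.repr v i := fun v i =>
    hSym.eigenvectorBasis_apply_self_apply hn v i
  -- each eigenvalue is ≤ -lam
  have hαle : ∀ i, α i ≤ -lam := by
    intro i
    have hev := hSym.hasEigenvalue_eigenvalues hn i
    have hne : ((α i : ℝ) : ℂ) ≠ 0 := by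
      intro h0
      obtain ⟨v, hv1, hv0⟩ := hev.exists_hasEigenvector
      have hv : A v = ((hSym.eigenvalues hn i : ℝ) : ℂ) • v :=
        Module.End.mem_eigenspace_iff.mp hv1
      rw [← hα] at hv
      rw [h0, zero_smul] at hv
      exact hv0 (hAinj (by simpa using hv))
    have h := hmin _ hev hne
    rw [← hα] at h
    simp only [Complex.ofReal_re, RCLike.ofReal_re, Complex.coe_algebraMap] at h
    linarith
  set c : Fin n → ℂ := fun i => b.repr x i with hc
  -- inner x (A x) as a sum
  have hinner : (inner ℂ x (A x) : ℂ) = ∑ i, (α i : ℂ) * (‖c i‖ ^ 2 : ℝ) := by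
    rw [← b.repr.inner_map_map x (A x)]
    rw [PiLp.inner_apply]
    refine Finset.sum_congr rfl fun i _ => ?_
    rw [hApplyRepr]
    simp only [RCLike.inner_apply]
    rw [show (α i : ℂ) * b.repr x i * (starRingEnd ℂ) (b.repr x i)
        = (α i : ℂ) * ((starRingEnd ℂ) (b.repr x i) * b.repr x i) by ring]
    rw [Complex.conj_mul']
    norm_cast
  have hnormx : ‖x‖ ^ 2 = ∑ i, ‖c i‖ ^ 2 := by
    have h := b.repr.norm_map x
    rw [← h, EuclideanSpace.norm_eq, Real.sq_sqrt (by positivity)]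
  -- real part of inner
  have hinner_re : (inner ℂ x (A x) : ℂ).re = ∑ i, α i * ‖c i‖ ^ 2 := by
    have h : (inner ℂ x (A x) : ℂ) = ((∑ i, α i * ‖c i‖ ^ 2 : ℝ) : ℂ) := by
      rw [hinner]; norm_cast
    rw [h, Complex.ofReal_re]
  -- sum of nonneg terms is zero
  have hsum0 : ∑ i, (-(α i) - lam) * ‖c i‖ ^ 2 = 0 := by
    have h : -(inner ℂ x (A x) : ℂ).re = lam * ‖x‖ ^ 2 := by
      simpa using hray
    rw [hinner_re, hnormx] at h
    rw [show (∑ i, (-(α i) - lam) * ‖c i‖ ^ 2)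
        = -(∑ i, α i * ‖c i‖ ^ 2) - lam * ∑ i, ‖c i‖ ^ 2 by
      rw [← Finset.sum_neg_distrib, Finset.mul_sum, ← Finset.sum_sub_distrib]
      exact Finset.sum_congr rfl fun i _ => by ring]
    rw [h]
    ring
  have hterm : ∀ i ∈ Finset.univ, (0:ℝ) ≤ (-(α i) - lam) * ‖c i‖ ^ 2 := by
    intro i _
    have h1 : (0:ℝ) ≤ -(α i) - lam := by have := hαle i; linarith
    have h2 : (0:ℝ) ≤ ‖c i‖ ^ 2 := by positivity
    exact mul_nonneg h1 h2
  have hzero : ∀ i, (-(α i) - lam) * ‖c i‖ ^ 2 = 0 := fun i =>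
    (Finset.sum_eq_zero_iff_of_nonneg hterm).mp hsum0 i (Finset.mem_univ i)
  -- conclude A x = -lam • x
  have hAx : A x = (-(lam : ℂ)) • x := by
    apply b.repr.injective
    apply PiLp.ext
    intro i
    rw [hApplyRepr, map_smul]
    simp only [PiLp.smul_apply, smul_eq_mul]
    rcases mul_eq_zero.mp (hzero i) with h | h
    · have hαi : α i = -lam := by linarith
      rw [hαi]; push_cast; ring
    · have hci : b.repr x i = 0 :=
        norm_eq_zero.mp (pow_eq_zero_iff (by norm_num : (2:ℕ) ≠ 0) |>.mp h)
      rw [hci]; ring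
  refine ⟨hAx, μ + lam, ?_⟩
  have hB : B x = μ • x - A x := by rw [← hL]; abel
  rw [hB, hAx, ← sub_smul]
  congr 1
  ring
end

section
/- Let L^D(X) = -[A,[A,X]] on B(ℂ^N) with A = Σ_j κ_j|j⟩⟨j| having simple eigenvalues, and H = Σ_{ij} H_{ij}|i⟩⟨j| a Hermitian matrix. Then the generator L = i[H,·] + L^D has trivial commutant-kernel {X : [H,X]=0 and [A,X]=0} = ℂ·1 (equivalently, the semigroup e^{tL} is primitive with unique invariant state 1/N) if and only if the matrix (H_{ij}) is irreducible (viewing i ~ j when H_{ij} ≠ 0). -/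
open Matrix

/-- For `A = diag(κ)` with distinct entries and a Hermitian matrix `H`, the generator
`L = i[H,·] - [A,[A,·]]` is primitive (the joint commutant `{X : [H,X]=0, [A,X]=0}` is
trivial) if and only if the matrix `(H_{ij})` is irreducible. -/
theorem primitive_iff_hamiltonian_irreducible {N : ℕ}
    (κ : Fin N → ℝ) (hκ : Function.Injective κ)
    (Hm : Matrix (Fin N) (Fin N) ℂ) (hH : Hm.IsHermitian) :
    ∀ A : Matrix (Fin N) (Fin N) ℂ, A = Matrix.diagonal (fun j => (κ j : ℂ)) →
      ((∀ X : Matrix (Fin N) (Fin N) ℂ,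
          Hm * X = X * Hm → A * X = X * A → ∃ c : ℂ, X = c • (1 : Matrix (Fin N) (Fin N) ℂ)) ↔
        ∀ i j : Fin N, Relation.ReflTransGen (fun a b => Hm a b ≠ 0) i j) := by
  intro A hA
  subst hA
  set R : Fin N → Fin N → Prop := fun a b => Hm a b ≠ 0 with hR
  have hsymm : ∀ a b, R a b → R b a := by
    intro a b hab
    simp only [hR] at hab ⊢
    intro h0
    apply hab
    rw [← hH.apply a b, h0, star_zero]
  classical
  constructor
  · intro h i j
    set d : Fin N → ℂ := fun k => if Relation.ReflTransGen R i k then 1 else 0 with hd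
    have hedge : ∀ a b, R a b → d a = d b := by
      intro a b hab
      simp only [hd]
      by_cases hia : Relation.ReflTransGen R i a
      · rw [if_pos hia, if_pos (hia.tail hab)]
      · rw [if_neg hia, if_neg (fun hib => hia (hib.tail (hsymm a b hab)))]
    obtain ⟨c, hc⟩ := h (Matrix.diagonal d)
      (by
        ext a b
        rw [Matrix.mul_diagonal, Matrix.diagonal_mul]
        by_cases hab : Hm a b = 0
        · rw [hab, zero_mul, mul_zero]
        · rw [hedge a b hab, mul_comm])
      (by
        simp [Matrix.diagonal_mul_diagonal, mul_comm])
    have hci := congrArg (fun M => M i i) hc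
    have hcj := congrArg (fun M => M j j) hc
    simp only [Matrix.diagonal_apply_eq, Matrix.smul_apply, Matrix.one_apply_eq,
      smul_eq_mul, mul_one] at hci hcj
    simp only [hd] at hci hcj
    rw [if_pos Relation.ReflTransGen.refl] at hci
    by_contra hij
    rw [if_neg hij] at hcj
    rw [← hci] at hcj
    exact one_ne_zero hcj.symm
  · intro hirr X hHX hAX
    -- X is diagonal
    have hdiag : ∀ a b : Fin N, a ≠ b → X a b = 0 := by
      intro a b hab
      have := congrArg (fun M => M a b) hAX
      simp only [Matrix.diagonal_mul, Matrix.mul_diagonal] at this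
      have hκab : (κ a : ℂ) ≠ (κ b : ℂ) := by
        intro h
        exact hab (hκ (by exact_mod_cast h))
      have : ((κ a : ℂ) - κ b) * X a b = 0 := by ring_nf; linear_combination this
      rcases mul_eq_zero.mp this with h | h
      · exact absurd (sub_eq_zero.mp h) hκab
      · exact h
    have hXd : X = Matrix.diagonal (fun k => X k k) := by
      ext a b
      by_cases hab : a = b
      · subst hab; simp
      · rw [Matrix.diagonal_apply_ne _ hab]; exact hdiag a b hab
    have hedge : ∀ a b, R a b → X a a = X b b := by
      intro a b hab
      have := congrArg (fun M => M a b) hHX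
      rw [hXd] at this
      simp only [Matrix.mul_diagonal, Matrix.diagonal_mul] at this
      exact (mul_left_cancel₀ hab (this.trans (mul_comm _ _))).symm
    rcases Nat.eq_zero_or_pos N with hN | hN
    · subst hN
      exact ⟨0, by ext a b; exact a.elim0⟩
    · have i0 : Fin N := ⟨0, hN⟩
      refine ⟨X i0 i0, ?_⟩
      have hall : ∀ k, X k k = X i0 i0 := by
        intro k
        have hchain := hirr i0 k
        induction hchain with
        | refl => rfl
        | tail _ hab ih => rw [← hedge _ _ hab]; exact ih
      rw [hXd]
      ext a b
      by_cases hab : a = b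
      · subst hab
        simp [hall a]
      · simp [Matrix.diagonal_apply_ne _ hab, Matrix.one_apply_ne hab]
end
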